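/- For the free particle on ℝ with propagator K(x'',x';T) as above, define K₄ := K(x₂',x₁;T₁₂)K(x₁,x₂;T₂₁)K(x₂,x₃;T₃₂)K(x₃,x₂';T₂₃). Then K₄ = (2πℏ|T₁₃|/m) · K₃(x₁,x₂,x₃;t₁,t₂,t₃) · conj(K₃(x₁,x₂',x₃;t₁,t₂,t₃)), where T_{kl} = t_k − t_l. -/

import Mathlib

open Real

/-- The free-particle propagator `K(x'',x';T) = (m/(2πiℏT))^{1/2} e^{(im/(2ℏT))(x''−x')²}`. -/
noncomputable def Kfree (m ℏ : ℝ) (x'' x' T : ℝ) : ℂ :=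
  ((m : ℂ) / (2 * (π : ℂ) * Complex.I * (ℏ : ℂ) * (T : ℂ))) ^ ((1 : ℂ) / 2) *
    Complex.exp (Complex.I * (m : ℂ) / (2 * (ℏ : ℂ) * (T : ℂ)) * ((x'' : ℂ) - (x' : ℂ)) ^ 2)

/-- `K₃(x₁,x₂,x₃;t₁,t₂,t₃) := K(x₁,x₂;t₂−t₁)·K(x₂,x₃;t₃−t₂)·K(x₃,x₁;t₁−t₃)`. -/
noncomputable def K3free (m ℏ : ℝ) (x₁ x₂ x₃ t₁ t₂ t₃ : ℝ) : ℂ :=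
  Kfree m ℏ x₁ x₂ (t₂ - t₁) * Kfree m ℏ x₂ x₃ (t₃ - t₂) * Kfree m ℏ x₃ x₁ (t₁ - t₃)

/-! Conjugation reverses time, `conj K(x,y;T) = K(x,y;−T)`: the base of the square root is purely
imaginary, so conjugation commutes with the principal branch. With the symmetry of `K` in its
spatial arguments, `conj K₃(x₁,x₂',x₃)` then supplies the first and last factors of `K₄` times
`conj K(x₃,x₁;T₁₃)`, and `K(x₃,x₁;T₁₃) · conj K(x₃,x₁;T₁₃) = |K|² = m/(2πℏ|T₁₃|)` cancels the
prefactor. -/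

open Complex ComplexConjugate

lemma Kfree_prefactor_eq (m ℏ T : ℝ) :
    (m : ℂ) / (2 * (π : ℂ) * I * (ℏ : ℂ) * (T : ℂ)) = ((m / (2 * π * ℏ * T) : ℝ) : ℂ) / I := by
  push_cast; ring

lemma Kfree_phase_eq (m ℏ a b T : ℝ) :
    I * (m : ℂ) / (2 * (ℏ : ℂ) * (T : ℂ)) * ((a : ℂ) - (b : ℂ)) ^ 2
      = ((m / (2 * ℏ * T) * (a - b) ^ 2 : ℝ) : ℂ) * I := by
  push_cast; ring

lemma Kfree_comm (m ℏ a b T : ℝ) : Kfree m ℏ a b T = Kfree m ℏ b a T := by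
  unfold Kfree; ring_nf

lemma conj_Kfree (m ℏ a b T : ℝ) : conj (Kfree m ℏ a b T) = Kfree m ℏ a b (-T) := by
  have harg : arg ((m : ℂ) / (2 * (π : ℂ) * I * (ℏ : ℂ) * (T : ℂ))) ≠ π := by
    intro h
    refine (arg_eq_pi_iff.1 h).1.ne ?_
    rw [Kfree_prefactor_eq, div_I, neg_re, re_ofReal_mul, I_re, mul_zero, neg_zero]
  have hhalf : conj ((1 : ℂ) / 2) = 1 / 2 := by simp only [map_div₀, map_one, map_ofNat]
  unfold Kfree
  rw [map_mul, ← hhalf, ← conj_cpow _ _ harg, hhalf, ← exp_conj]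
  congr 3
  · simp only [map_div₀, map_mul, conj_ofReal, conj_I, map_ofNat, ofReal_neg]
    ring
  · simp only [map_div₀, map_mul, conj_ofReal, conj_I, map_ofNat, ofReal_neg, map_pow, map_sub]
    ring

lemma norm_Kfree (m ℏ a b T : ℝ) : ‖Kfree m ℏ a b T‖ = √|m / (2 * π * ℏ * T)| := by
  have hhalf : (1 : ℂ) / 2 = ((1 / 2 : ℝ) : ℂ) := by push_cast; rfl
  unfold Kfree
  rw [norm_mul, Kfree_phase_eq, norm_exp_ofReal_mul_I, mul_one, hhalf, norm_cpow_real,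
    Kfree_prefactor_eq, norm_div, norm_I, div_one, norm_real, Real.norm_eq_abs,
    Real.sqrt_eq_rpow]

lemma Kfree_mul_conj (m ℏ a b T : ℝ) :
    Kfree m ℏ a b T * conj (Kfree m ℏ a b T) = ((|m / (2 * π * ℏ * T)| : ℝ) : ℂ) := by
  rw [mul_conj, normSq_eq_norm_sq, norm_Kfree, Real.sq_sqrt (abs_nonneg _)]

lemma conj_Kfree_sub (m ℏ a b t s : ℝ) : conj (Kfree m ℏ a b (t - s)) = Kfree m ℏ b a (s - t) := by
  rw [conj_Kfree, neg_sub, Kfree_comm]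

theorem K4_eq_K3_mul_conj_K3
    (m ℏ : ℝ) (hm : 0 < m) (hℏ : 0 < ℏ)
    (x₁ x₂ x₃ x₂' t₁ t₂ t₃ : ℝ)
    (h13 : t₁ ≠ t₃) :
    Kfree m ℏ x₂' x₁ (t₁ - t₂) * Kfree m ℏ x₁ x₂ (t₂ - t₁) *
        Kfree m ℏ x₂ x₃ (t₃ - t₂) * Kfree m ℏ x₃ x₂' (t₂ - t₃)
      = ((2 * π * ℏ * |t₁ - t₃| / m : ℝ) : ℂ) *
          K3free m ℏ x₁ x₂ x₃ t₁ t₂ t₃ *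
          (starRingEnd ℂ) (K3free m ℏ x₁ x₂' x₃ t₁ t₂ t₃) := by
  have hT : |t₁ - t₃| ≠ 0 := abs_ne_zero.2 (sub_ne_zero.2 h13)
  have hprefactor : ((2 * π * ℏ * |t₁ - t₃| / m : ℝ) : ℂ) *
      (Kfree m ℏ x₃ x₁ (t₁ - t₃) * conj (Kfree m ℏ x₃ x₁ (t₁ - t₃))) = 1 := by
    rw [Kfree_mul_conj, ← ofReal_mul, abs_div, abs_mul, abs_mul, abs_mul, abs_of_pos hm,
      abs_of_pos hℏ, abs_of_pos pi_pos, abs_two, ← ofReal_one]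
    congr 1
    field_simp
  unfold K3free
  rw [map_mul, map_mul, conj_Kfree_sub, conj_Kfree_sub]
  linear_combination (-(Kfree m ℏ x₂' x₁ (t₁ - t₂) * Kfree m ℏ x₁ x₂ (t₂ - t₁) *
    Kfree m ℏ x₂ x₃ (t₃ - t₂) * Kfree m ℏ x₃ x₂' (t₂ - t₃))) * hprefactor
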